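/- Let Λ be the ℤ²-graded exterior algebra over F₂ on generators r_i (i ≥ 0), where r_i has bidegree (1 − 2^{i+1}, 1 − 2^i) ∈ ℤ². Then every bigraded homogeneous component of Λ has F₂-dimension at most 1, with basis given by the square-free monomials r_S = ∏_{i∈S} r_i for finite subsets S ⊆ ℕ. -/
import Mathlib


/-- The bidegree of the square-free monomial `r_S = ∏_{i∈S} r_i`, where `r_i` has
bidegree `(1 − 2^{i+1}, 1 − 2^i)`. -/
def exteriorBidegree (S : Finset ℕ) : ℤ × ℤ :=
  (∑ i ∈ S, (1 - (2 : ℤ) ^ (i + 1)), ∑ i ∈ S, (1 - (2 : ℤ) ^ i))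

lemma exteriorBidegree_sub (S : Finset ℕ) :
    (exteriorBidegree S).2 - (exteriorBidegree S).1 = ∑ i ∈ S, (2 : ℤ) ^ i := by
  simp only [exteriorBidegree, ← Finset.sum_sub_distrib]
  refine Finset.sum_congr rfl fun i _ => ?_
  ring

lemma exteriorBidegree_injective : Function.Injective exteriorBidegree := by
  intro S T h
  have key : ∑ i ∈ S, (2 : ℤ) ^ i = ∑ i ∈ T, (2 : ℤ) ^ i := by
    rw [← exteriorBidegree_sub, ← exteriorBidegree_sub, h]
  have keyN : ∑ i ∈ S, (2 : ℕ) ^ i = ∑ i ∈ T, (2 : ℕ) ^ i := by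
    exact_mod_cast key
  exact Finset.geomSum_injective le_rfl keyN

/-- Realize the `ℤ²`-graded exterior algebra `Λ_{F₂}(r_i)_{i≥0}` as the vector space
with basis the square-free monomials `r_S` indexed by finite subsets `S ⊆ ℕ`; the
homogeneous component of bidegree `d` is the span of the basis vectors `r_S` with
`exteriorBidegree S = d`. Each such component has dimension at most `1`. -/
theorem stmt_3 (d : ℤ × ℤ) :
    Module.rank (ZMod 2)
      (Submodule.span (ZMod 2)
        {v : Finset ℕ →₀ ZMod 2 | ∃ S : Finset ℕ,
          exteriorBidegree S = d ∧ v = Finsupp.single S 1}) ≤ 1 := by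
  refine (rank_span_le _).trans ?_
  rw [Cardinal.mk_le_one_iff_set_subsingleton]
  rintro v ⟨S, hS, rfl⟩ w ⟨T, hT, rfl⟩
  rw [exteriorBidegree_injective (hS.trans hT.symm)]
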